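/- For every fixed q ≥ 2 and fixed i with q − 1 ≤ i ≤ n, the function j ↦ max( M(q−1, j−1), R_{ji} ) on {q−1,...,i} is unimodal with a unique minimum value. -/

import Mathlib

/-- Maximum of `f` over a finite set of indices, with the empty maximum being `0`. -/
noncomputable def maxOver (S : Finset ℕ) (f : ℕ → ℝ) : ℝ := S.fold max 0 f

/-- Left evacuation time to sink `x t` of the subpath starting at `x l`, under weights `w`. -/
noncomputable def thetaL (x : ℕ → ℝ) (τ : ℝ) (w : ℕ → ℝ) (l t : ℕ) : ℝ :=
  maxOver (Finset.Ico l t) (fun i => (x t - x i) * τ + ∑ j ∈ Finset.Icc l i, w j)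

/-- Right evacuation time to sink `x t` of the subpath ending at `x r`, under weights `w`. -/
noncomputable def thetaR (x : ℕ → ℝ) (τ : ℝ) (w : ℕ → ℝ) (t r : ℕ) : ℝ :=
  maxOver (Finset.Ioc t r) (fun i => (x i - x t) * τ + ∑ j ∈ Finset.Icc i r, w j)

/-- 1-sink evacuation time `Θ¹([x_l,x_r], x_t, w)`. -/
noncomputable def theta1 (x : ℕ → ℝ) (τ : ℝ) (w : ℕ → ℝ) (l t r : ℕ) : ℝ :=
  max (thetaL x τ w l t) (thetaR x τ w t r)

/-- A scenario assigns each vertex a weight within its bounds. -/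
def IsScenario (n : ℕ) (wlo whi : ℕ → ℝ) (s : ℕ → ℝ) : Prop :=
  ∀ i, i ≤ n → wlo i ≤ s i ∧ s i ≤ whi i

/-- A `k`-partition-with-sinks of the vertex set `{0,…,n}` into `k` consecutive
nonempty blocks `{l p, …, r p}` (`p ∈ {1,…,k}`) with a sink `t p` in each block. -/
structure KPartSinks (n k : ℕ) where
  l : ℕ → ℕ
  r : ℕ → ℕ
  t : ℕ → ℕ
  first : l 1 = 0
  last : r k = n
  consec : ∀ p, 1 ≤ p → p < k → l (p + 1) = r p + 1
  block_nonempty : ∀ p, 1 ≤ p → p ≤ k → l p ≤ r p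
  sink_lb : ∀ p, 1 ≤ p → p ≤ k → l p ≤ t p
  sink_ub : ∀ p, 1 ≤ p → p ≤ k → t p ≤ r p

/-- `k`-sink evacuation time `Θᵏ(P, {P̂,Ŷ}, w)`. -/
noncomputable def thetaK {n k : ℕ} (x : ℕ → ℝ) (τ : ℝ) (PY : KPartSinks n k) (w : ℕ → ℝ) : ℝ :=
  maxOver (Finset.Icc 1 k) (fun p => theta1 x τ w (PY.l p) (PY.t p) (PY.r p))

/-- Optimal `k`-sink evacuation time `Θᵏ_opt(P, w)`. -/
noncomputable def thetaOpt (x : ℕ → ℝ) (τ : ℝ) (n k : ℕ) (w : ℕ → ℝ) : ℝ :=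
  sInf {v : ℝ | ∃ PY : KPartSinks n k, thetaK x τ PY w = v}

/-- Regret `R({P̂,Ŷ}, w)`. -/
noncomputable def regret {n k : ℕ} (x : ℕ → ℝ) (τ : ℝ) (PY : KPartSinks n k) (w : ℕ → ℝ) : ℝ :=
  thetaK x τ PY w - thetaOpt x τ n k w

/-- Max-regret `R_max({P̂,Ŷ})`. -/
noncomputable def maxRegret {n k : ℕ} (x : ℕ → ℝ) (τ : ℝ) (wlo whi : ℕ → ℝ)
    (PY : KPartSinks n k) : ℝ :=
  sSup {v : ℝ | ∃ s : ℕ → ℝ, IsScenario n wlo whi s ∧ regret x τ PY s = v}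

/-- A worst-case scenario: a scenario attaining the max-regret. -/
def IsWorstCase {n k : ℕ} (x : ℕ → ℝ) (τ : ℝ) (wlo whi : ℕ → ℝ) (PY : KPartSinks n k)
    (s : ℕ → ℝ) : Prop :=
  IsScenario n wlo whi s ∧ regret x τ PY s = maxRegret x τ wlo whi PY

/-- `d` is the index of the dominant part of `{P̂,Ŷ}` under weights `w`:
the smallest index attaining `max_p Θ¹(P_p, y_p, w)`. -/
def IsDominant {n k : ℕ} (x : ℕ → ℝ) (τ : ℝ) (PY : KPartSinks n k) (w : ℕ → ℝ) (d : ℕ) : Prop :=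
  1 ≤ d ∧ d ≤ k ∧
  (∀ p, 1 ≤ p → p ≤ k →
    theta1 x τ w (PY.l p) (PY.t p) (PY.r p) ≤ theta1 x τ w (PY.l d) (PY.t d) (PY.r d)) ∧
  (∀ p, 1 ≤ p → p < d →
    theta1 x τ w (PY.l p) (PY.t p) (PY.r p) < theta1 x τ w (PY.l d) (PY.t d) (PY.r d))

/-- `R_{lr}(x_t)`: the max-regret of the subpath `[x_l,x_r]` as assumed dominant
part with sink `x_t`. -/
noncomputable def Rsink (x : ℕ → ℝ) (τ : ℝ) (wlo whi : ℕ → ℝ) (n k : ℕ) (l r t : ℕ) : ℝ :=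
  sSup {v : ℝ | ∃ s : ℕ → ℝ, IsScenario n wlo whi s ∧
    theta1 x τ s l t r - thetaOpt x τ n k s = v}

/-- `R_{lr}`: the minimax regret of the subpath `[x_l,x_r]` as assumed dominant part. -/
noncomputable def Rlr (x : ℕ → ℝ) (τ : ℝ) (wlo whi : ℕ → ℝ) (n k : ℕ) (l r : ℕ) : ℝ :=
  sInf {v : ℝ | ∃ t, l ≤ t ∧ t ≤ r ∧ Rsink x τ wlo whi n k l r t = v}

/-- A partition of `{0,…,i}` into `q` consecutive nonempty blocks `{l p, …, r p}`. -/
def IsQPartition (q i : ℕ) (l r : ℕ → ℕ) : Prop :=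
  l 1 = 0 ∧ r q = i ∧ (∀ p, 1 ≤ p → p < q → l (p + 1) = r p + 1) ∧
  (∀ p, 1 ≤ p → p ≤ q → l p ≤ r p)

/-- `M(q, i)`: the minimum over partitions of `{0,…,i}` into `q` consecutive
nonempty blocks of `max_p R_{l_p r_p}`. -/
noncomputable def Mreg (x : ℕ → ℝ) (τ : ℝ) (wlo whi : ℕ → ℝ) (n k : ℕ) (q i : ℕ) : ℝ :=
  sInf {v : ℝ | ∃ lf rf : ℕ → ℕ, IsQPartition q i lf rf ∧
    maxOver (Finset.Icc 1 q) (fun p => Rlr x τ wlo whi n k (lf p) (rf p)) = v}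

/-- Left-dominant scenario on `{l,…,r}`. -/
def LeftDominant (wlo whi s : ℕ → ℝ) (l r : ℕ) : Prop :=
  ∃ i, l ≤ i ∧ i ≤ r + 1 ∧ (∀ j, l ≤ j → j < i → s j = whi j) ∧
    (∀ j, i ≤ j → j ≤ r → s j = wlo j)

/-- Right-dominant scenario on `{l,…,r}`. -/
def RightDominant (wlo whi s : ℕ → ℝ) (l r : ℕ) : Prop :=
  ∃ i, l ≤ i ∧ i ≤ r + 1 ∧ (∀ j, l ≤ j → j < i → s j = wlo j) ∧
    (∀ j, i ≤ j → j ≤ r → s j = whi j)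

/-! Shrinking a subpath (and clamping its sink into it) cannot increase its evacuation time under
any nonnegative weights, so `R_{lr}` is monotone under inclusion of subpaths. Hence
`j ↦ R_{ji}` is nonincreasing. Truncating the blocks of a partition of `{0,…,i'}` at
`i + p - q` gives a partition of `{0,…,i}` whose blocks each lie inside an old block, so
`M(q, ·)` is nondecreasing. The maximum of a nondecreasing and a nonincreasing function is
unimodal around any of its minimizers. -/

open Finset

section MaxOver

variable {S T : Finset ℕ} {f g : ℕ → ℝ}

theorem maxOver_nonneg (S : Finset ℕ) (f : ℕ → ℝ) : 0 ≤ maxOver S f :=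
  (le_fold_max _).mpr (Or.inl le_rfl)

theorem le_maxOver {a : ℕ} (ha : a ∈ S) : f a ≤ maxOver S f :=
  (le_fold_max _).mpr (Or.inr ⟨a, ha, le_rfl⟩)

theorem maxOver_le {b : ℝ} (hb : 0 ≤ b) (h : ∀ a ∈ S, f a ≤ b) : maxOver S f ≤ b :=
  (fold_max_le b).mpr ⟨hb, h⟩

theorem maxOver_le_maxOver (h : ∀ a ∈ S, ∃ b ∈ T, f a ≤ g b) : maxOver S f ≤ maxOver T g :=
  maxOver_le (maxOver_nonneg T g) fun a ha =>
    let ⟨_, hb, hab⟩ := h a ha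
    hab.trans (le_maxOver hb)

end MaxOver

section EvacuationTime

variable {n : ℕ} {x : ℕ → ℝ} {τ : ℝ} {s s' : ℕ → ℝ} {l l' t t' r r' : ℕ}

theorem theta1_nonneg : 0 ≤ theta1 x τ s l t r :=
  (maxOver_nonneg _ _).trans (le_max_left _ _)

theorem thetaL_le_thetaL (hx : MonotoneOn x (Set.Iic n)) (hτ : 0 ≤ τ)
    (hs' : ∀ j ≤ n, 0 ≤ s' j) (hss' : ∀ j ≤ n, s j ≤ s' j) (htn : t ≤ n) (hl : l ≤ l')
    (ht : t' ≤ t ∨ t' ≤ l') : thetaL x τ s l' t' ≤ thetaL x τ s' l t := by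
  refine maxOver_le_maxOver fun a ha => ?_
  rw [mem_Ico] at ha
  have ht' : t' ≤ t := by omega
  refine ⟨a, mem_Ico.mpr ⟨by omega, by omega⟩, add_le_add ?_ ?_⟩
  · have := hx (by simp only [Set.mem_Iic]; omega) (Set.mem_Iic.mpr htn) ht'
    exact mul_le_mul_of_nonneg_right (by linarith) hτ
  · calc ∑ j ∈ Icc l' a, s j ≤ ∑ j ∈ Icc l' a, s' j :=
          sum_le_sum fun j hj => hss' j (by rw [mem_Icc] at hj; omega)
      _ ≤ ∑ j ∈ Icc l a, s' j :=
          sum_le_sum_of_subset_of_nonneg (Icc_subset_Icc_left hl)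
            fun j hj _ => hs' j (by rw [mem_Icc] at hj; omega)

theorem thetaR_le_thetaR (hx : MonotoneOn x (Set.Iic n)) (hτ : 0 ≤ τ)
    (hs' : ∀ j ≤ n, 0 ≤ s' j) (hss' : ∀ j ≤ n, s j ≤ s' j) (hrn : r ≤ n) (hr : r' ≤ r)
    (ht : t ≤ t' ∨ r' ≤ t') : thetaR x τ s t' r' ≤ thetaR x τ s' t r := by
  refine maxOver_le_maxOver fun a ha => ?_
  rw [mem_Ioc] at ha
  have ht' : t ≤ t' := by omega
  refine ⟨a, mem_Ioc.mpr ⟨by omega, by omega⟩, add_le_add ?_ ?_⟩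
  · have := hx (by simp only [Set.mem_Iic]; omega) (by simp only [Set.mem_Iic]; omega) ht'
    exact mul_le_mul_of_nonneg_right (by linarith) hτ
  · calc ∑ j ∈ Icc a r', s j ≤ ∑ j ∈ Icc a r', s' j :=
          sum_le_sum fun j hj => hss' j (by rw [mem_Icc] at hj; omega)
      _ ≤ ∑ j ∈ Icc a r, s' j :=
          sum_le_sum_of_subset_of_nonneg (Icc_subset_Icc_right hr)
            fun j hj _ => hs' j (by rw [mem_Icc] at hj; omega)

/-- On each side, the new sink `t'` either lies no further out than the old sink `t`, or leaves
that side of the new subpath empty. -/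
theorem theta1_le_theta1 (hx : MonotoneOn x (Set.Iic n)) (hτ : 0 ≤ τ)
    (hs' : ∀ j ≤ n, 0 ≤ s' j) (hss' : ∀ j ≤ n, s j ≤ s' j) (htn : t ≤ n) (hrn : r ≤ n)
    (hl : l ≤ l') (hr : r' ≤ r) (htL : t' ≤ t ∨ t' ≤ l') (htR : t ≤ t' ∨ r' ≤ t') :
    theta1 x τ s l' t' r' ≤ theta1 x τ s' l t r :=
  max_le_max (thetaL_le_thetaL hx hτ hs' hss' htn hl htL)
    (thetaR_le_thetaR hx hτ hs' hss' hrn hr htR)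

end EvacuationTime

section Regret

variable {n k : ℕ} {x : ℕ → ℝ} {τ : ℝ} {wlo whi : ℕ → ℝ} {l l' t t' r r' : ℕ}

theorem thetaOpt_nonneg {s : ℕ → ℝ} : 0 ≤ thetaOpt x τ n k s :=
  Real.sInf_nonneg fun _ ⟨_, hv⟩ => hv ▸ maxOver_nonneg _ _

theorem le_Rsink (hx : MonotoneOn x (Set.Iic n)) (hτ : 0 ≤ τ)
    (hw : ∀ i ≤ n, 0 ≤ wlo i ∧ wlo i ≤ whi i) (htn : t ≤ n) (hrn : r ≤ n) {s : ℕ → ℝ}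
    (hs : IsScenario n wlo whi s) :
    theta1 x τ s l t r - thetaOpt x τ n k s ≤ Rsink x τ wlo whi n k l r t := by
  refine le_csSup ⟨theta1 x τ whi l t r, ?_⟩ ⟨s, hs, rfl⟩
  rintro _ ⟨s, hs, rfl⟩
  have hle : theta1 x τ s l t r ≤ theta1 x τ whi l t r :=
    theta1_le_theta1 hx hτ (fun j hj => (hw j hj).1.trans (hw j hj).2) (fun j hj => (hs j hj).2)
      htn hrn le_rfl le_rfl (Or.inl le_rfl) (Or.inl le_rfl)
  linarith [thetaOpt_nonneg (x := x) (τ := τ) (n := n) (k := k) (s := s)]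

theorem Rsink_le (hw : ∀ i ≤ n, 0 ≤ wlo i ∧ wlo i ≤ whi i) {c : ℝ}
    (h : ∀ s, IsScenario n wlo whi s → theta1 x τ s l t r - thetaOpt x τ n k s ≤ c) :
    Rsink x τ wlo whi n k l r t ≤ c :=
  csSup_le ⟨_, wlo, fun i hi => ⟨le_rfl, (hw i hi).2⟩, rfl⟩ fun _ ⟨s, hs, hv⟩ => hv ▸ h s hs

theorem neg_thetaOpt_le_Rsink (hx : MonotoneOn x (Set.Iic n)) (hτ : 0 ≤ τ)
    (hw : ∀ i ≤ n, 0 ≤ wlo i ∧ wlo i ≤ whi i) (htn : t ≤ n) (hrn : r ≤ n) :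
    -thetaOpt x τ n k wlo ≤ Rsink x τ wlo whi n k l r t := by
  have := le_Rsink (l := l) (k := k) hx hτ hw htn hrn fun i hi => ⟨le_rfl, (hw i hi).2⟩
  linarith [theta1_nonneg (x := x) (τ := τ) (s := wlo) (l := l) (t := t) (r := r)]

theorem Rsink_mono (hx : MonotoneOn x (Set.Iic n)) (hτ : 0 ≤ τ)
    (hw : ∀ i ≤ n, 0 ≤ wlo i ∧ wlo i ≤ whi i) (htn : t ≤ n) (hrn : r ≤ n)
    (hl : l ≤ l') (hr : r' ≤ r) (htL : t' ≤ t ∨ t' ≤ l') (htR : t ≤ t' ∨ r' ≤ t') :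
    Rsink x τ wlo whi n k l' r' t' ≤ Rsink x τ wlo whi n k l r t :=
  Rsink_le hw fun _ hs =>
    (sub_le_sub_right (theta1_le_theta1 hx hτ (fun j hj => (hw j hj).1.trans (hs j hj).1)
      (fun _ _ => le_rfl) htn hrn hl hr htL htR) _).trans (le_Rsink hx hτ hw htn hrn hs)

theorem Rlr_mono (hx : MonotoneOn x (Set.Iic n)) (hτ : 0 ≤ τ)
    (hw : ∀ i ≤ n, 0 ≤ wlo i ∧ wlo i ≤ whi i)
    (hl : l ≤ l') (hlr' : l' ≤ r') (hr : r' ≤ r) (hrn : r ≤ n) :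
    Rlr x τ wlo whi n k l' r' ≤ Rlr x τ wlo whi n k l r := by
  have hbdd : BddBelow {v | ∃ t, l' ≤ t ∧ t ≤ r' ∧ Rsink x τ wlo whi n k l' r' t = v} :=
    ⟨_, fun _ ⟨_, _, ht, hv⟩ => hv ▸ neg_thetaOpt_le_Rsink hx hτ hw (by omega) (by omega)⟩
  refine le_csInf ⟨_, l, le_rfl, by omega, rfl⟩ ?_
  rintro _ ⟨t, hlt, htr, rfl⟩
  exact (csInf_le hbdd ⟨max l' (min t r'), by omega, by omega, rfl⟩).trans
    (Rsink_mono hx hτ hw (by omega) hrn hl hr (by omega) (by omega))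

end Regret

theorem exists_isQPartition {q i : ℕ} (hi : q - 1 ≤ i) : ∃ l r, IsQPartition q i l r :=
  ⟨fun p => p - 1, fun p => if p = q then i else p - 1, rfl, by simp,
    fun p _ hpq => by simp only [if_neg hpq.ne]; omega,
    fun p _ _ => by dsimp only; split_ifs <;> omega⟩

namespace IsQPartition

variable {q i i' j : ℕ} {l r : ℕ → ℕ}

theorem r_le (h : IsQPartition q i l r) {p : ℕ} (hp : 1 ≤ p) (hpq : p ≤ q) : r p ≤ i := by
  obtain ⟨-, hrq, hcons, hne⟩ := h
  have hmono : ∀ m, p ≤ m → m ≤ q → r p ≤ r m := by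
    intro m hpm
    induction m, hpm using Nat.le_induction with
    | base => exact fun _ => le_rfl
    | succ m hpm ih =>
      intro hmq
      have := hcons m (by omega) (by omega)
      have := hne (m + 1) (by omega) hmq
      have := ih (by omega)
      omega
  exact hrq ▸ hmono q hpq le_rfl

/-- The block containing `j` is the last one starting at or before `j`. -/
theorem exists_mem (h : IsQPartition q i l r) (hq : 1 ≤ q) (hj : j ≤ i) :
    ∃ p, 1 ≤ p ∧ p ≤ q ∧ l p ≤ j ∧ j ≤ r p := by
  obtain ⟨hl1, hrq, hcons, -⟩ := h
  have h1 : l 1 ≤ j := by omega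
  have hpq := Nat.findGreatest_le (P := fun p => l p ≤ j) q
  have hp1 := Nat.le_findGreatest (P := fun p => l p ≤ j) hq h1
  have hlp := Nat.findGreatest_spec (P := fun p => l p ≤ j) hq h1
  have hnext := Nat.findGreatest_is_greatest (P := fun p => l p ≤ j) (n := q) (Nat.lt_add_one _)
  generalize Nat.findGreatest (fun p => l p ≤ j) q = p at *
  refine ⟨p, hp1, hpq, hlp, ?_⟩
  rcases hpq.eq_or_lt with rfl | hlt
  · omega
  · have := hnext hlt
    have := hcons p hp1 hlt
    omega

/-- Truncating every block `p` at `i + p - q` turns a partition of `{0,…,i'}` into one of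
`{0,…,i}`: a block that is cut away entirely becomes the singleton `{i + p - q}`. -/
theorem exists_shrink (h : IsQPartition q i' l r) (hi : q - 1 ≤ i) (hii' : i ≤ i') :
    ∃ l' r', IsQPartition q i l' r' ∧
      ∀ p, 1 ≤ p → p ≤ q → ∃ p', 1 ≤ p' ∧ p' ≤ q ∧ l p' ≤ l' p ∧ r' p ≤ r p' := by
  have ⟨hl1, hrq, hcons, hne⟩ := h
  refine ⟨fun p => min (l p) (i + p - q), fun p => min (r p) (i + p - q),
    ⟨by simp [hl1], by simp [hrq, hii'], fun p hp hpq => ?_, fun p hp hpq => ?_⟩,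
    fun p hp hpq => ?_⟩
  · have := hcons p hp hpq
    dsimp only
    omega
  · have := hne p hp hpq
    dsimp only
    omega
  · by_cases hc : i + p - q < l p
    · obtain ⟨p', hp', hp'q, hlp', hrp'⟩ :=
        h.exists_mem (j := i + p - q) (by omega) (by omega)
      exact ⟨p', hp', hp'q, by dsimp only; omega, by dsimp only; omega⟩
    · exact ⟨p, hp, hpq, by dsimp only; omega, min_le_left _ _⟩

end IsQPartition

section Mreg

variable {n k : ℕ} {x : ℕ → ℝ} {τ : ℝ} {wlo whi : ℕ → ℝ}

theorem Mreg_mono (hx : MonotoneOn x (Set.Iic n)) (hτ : 0 ≤ τ)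
    (hw : ∀ i ≤ n, 0 ≤ wlo i ∧ wlo i ≤ whi i) {q i i' : ℕ}
    (hi : q - 1 ≤ i) (hii' : i ≤ i') (hi'n : i' ≤ n) :
    Mreg x τ wlo whi n k q i ≤ Mreg x τ wlo whi n k q i' := by
  obtain ⟨l₀, r₀, h₀⟩ := exists_isQPartition (q := q) (i := i') (by omega)
  refine le_csInf ⟨_, l₀, r₀, h₀, rfl⟩ ?_
  rintro _ ⟨l, r, h, rfl⟩
  obtain ⟨l', r', h', hsub⟩ := h.exists_shrink hi hii'
  have hbdd : BddBelow {v | ∃ l r, IsQPartition q i l r ∧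
      maxOver (Icc 1 q) (fun p => Rlr x τ wlo whi n k (l p) (r p)) = v} :=
    ⟨0, by rintro _ ⟨_, _, _, rfl⟩; exact maxOver_nonneg _ _⟩
  refine (csInf_le hbdd ⟨l', r', h', rfl⟩).trans (maxOver_le_maxOver fun p hp => ?_)
  rw [mem_Icc] at hp
  obtain ⟨p', hp', hp'q, hl, hr⟩ := hsub p hp.1 hp.2
  exact ⟨p', mem_Icc.mpr ⟨hp', hp'q⟩, Rlr_mono hx hτ hw hl (h'.2.2.2 p hp.1 hp.2) hr
    ((h.r_le hp' hp'q).trans hi'n)⟩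

end Mreg

theorem exists_antitoneOn_monotoneOn_max {f g : ℕ → ℝ} {a b : ℕ} (hab : a ≤ b)
    (hf : MonotoneOn f (Set.Icc a b)) (hg : AntitoneOn g (Set.Icc a b)) :
    ∃ m ∈ Set.Icc a b, AntitoneOn (fun j => max (f j) (g j)) (Set.Icc a m) ∧
      MonotoneOn (fun j => max (f j) (g j)) (Set.Icc m b) := by
  obtain ⟨m, hm, hmin⟩ :=
    (Finset.Icc a b).exists_min_image (fun j => max (f j) (g j)) (nonempty_Icc.mpr hab)
  rw [mem_Icc] at hm
  refine ⟨m, hm, fun j hj j' hj' hjj' => ?_, fun j hj j' hj' hjj' => ?_⟩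
  · have hmj := hmin j (mem_Icc.mpr ⟨hj.1, hj.2.trans hm.2⟩)
    have := hf ⟨hj'.1, hj'.2.trans hm.2⟩ hm hj'.2
    have := hg ⟨hj.1, hj.2.trans hm.2⟩ ⟨hj'.1, hj'.2.trans hm.2⟩ hjj'
    exact max_le (by linarith [le_max_left (f m) (g m)]) (this.trans (le_max_right _ _))
  · have hmj' := hmin j' (mem_Icc.mpr ⟨hm.1.trans hj'.1, hj'.2⟩)
    have := hg hm ⟨hm.1.trans hj.1, hj.2⟩ hj.1
    have := hf ⟨hm.1.trans hj.1, hj.2⟩ ⟨hm.1.trans hj'.1, hj'.2⟩ hjj'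
    exact max_le (this.trans (le_max_left _ _)) (by linarith [le_max_right (f m) (g m)])

theorem stmt_14_general (n k : ℕ) (x : ℕ → ℝ) (τ : ℝ) (wlo whi : ℕ → ℝ)
    (hx : ∀ i, i < n → x i < x (i + 1)) (hτ : 0 < τ)
    (hw : ∀ i, i ≤ n → 0 < wlo i ∧ wlo i ≤ whi i)
    (q i : ℕ) (hi1 : q - 1 ≤ i) (hi2 : i ≤ n) :
    ∃ m, q - 1 ≤ m ∧ m ≤ i ∧
      (∀ a a', q - 1 ≤ a → a ≤ a' → a' ≤ m →
        max (Mreg x τ wlo whi n k (q - 1) (a' - 1)) (Rlr x τ wlo whi n k a' i) ≤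
        max (Mreg x τ wlo whi n k (q - 1) (a - 1)) (Rlr x τ wlo whi n k a i)) ∧
      (∀ a a', m ≤ a → a ≤ a' → a' ≤ i →
        max (Mreg x τ wlo whi n k (q - 1) (a - 1)) (Rlr x τ wlo whi n k a i) ≤
        max (Mreg x τ wlo whi n k (q - 1) (a' - 1)) (Rlr x τ wlo whi n k a' i)) := by
  have hxm : MonotoneOn x (Set.Iic n) :=
    (strictMonoOn_Iic_of_lt_succ fun m hm => by simpa using hx m hm).monotoneOn
  have hw' : ∀ i ≤ n, 0 ≤ wlo i ∧ wlo i ≤ whi i := fun i hi => ⟨(hw i hi).1.le, (hw i hi).2⟩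
  obtain ⟨m, hm, hanti, hmono⟩ := exists_antitoneOn_monotoneOn_max hi1
    (f := fun j => Mreg x τ wlo whi n k (q - 1) (j - 1))
    (fun j ⟨hj, _⟩ j' ⟨_, hj'⟩ hjj' => Mreg_mono hxm hτ.le hw' (by omega) (by omega) (by omega))
    (g := fun j => Rlr x τ wlo whi n k j i)
    (fun j _ j' hj' hjj' => Rlr_mono hxm hτ.le hw' hjj' hj'.2 le_rfl hi2)
  exact ⟨m, hm.1, hm.2, fun a a' ha haa' ha'm => hanti ⟨ha, by omega⟩ ⟨by omega, ha'm⟩ haa',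
    fun a a' hma haa' ha'i => hmono ⟨hma, by omega⟩ ⟨by omega, ha'i⟩ haa'⟩

/-- for fixed `q ≥ 2` and `i`, the function
`j ↦ max(M(q−1, j−1), R_{ji})` is unimodal with a unique minimum value on
`{q−1, …, i}`. -/
theorem stmt_14 (n k : ℕ) (x : ℕ → ℝ) (τ : ℝ) (wlo whi : ℕ → ℝ)
    (hx : ∀ i, i < n → x i < x (i + 1)) (hτ : 0 < τ)
    (hw : ∀ i, i ≤ n → 0 < wlo i ∧ wlo i ≤ whi i) (hk : 1 ≤ k)
    (q i : ℕ) (hq : 2 ≤ q) (hi1 : q - 1 ≤ i) (hi2 : i ≤ n) :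
    ∃ m, q - 1 ≤ m ∧ m ≤ i ∧
      (∀ a a', q - 1 ≤ a → a ≤ a' → a' ≤ m →
        max (Mreg x τ wlo whi n k (q - 1) (a' - 1)) (Rlr x τ wlo whi n k a' i) ≤
        max (Mreg x τ wlo whi n k (q - 1) (a - 1)) (Rlr x τ wlo whi n k a i)) ∧
      (∀ a a', m ≤ a → a ≤ a' → a' ≤ i →
        max (Mreg x τ wlo whi n k (q - 1) (a - 1)) (Rlr x τ wlo whi n k a i) ≤
        max (Mreg x τ wlo whi n k (q - 1) (a' - 1)) (Rlr x τ wlo whi n k a' i)) :=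
  stmt_14_general n k x τ wlo whi hx hτ hw q i hi1 hi2
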